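/- Let A = Σ_{k=1}^d σ_k u_k v_kᵀ be a rank-d matrix with SVD and let = A + E with leading-d truncated SVD Û D̂ V̂ᵀ. If σ̂_d > 0 (the d-th singular value of Â), then ‖sin Θ(U, Û)‖₂ ≤ ‖E‖₂ / σ̂_d and ‖sin Θ(V, V̂)‖₂ ≤ ‖E‖₂ / σ̂_d, where U = [u_1,…,u_d] and V = [v_1,…,v_d]. -/

import Mathlib

/-!
Pick a unit vector `v` with `‖Uᵀ Û v‖ = σ_min(Uᵀ Û)`; then `y = Û v` is a unit vector whose
component orthogonal to `col U` has squared length `1 - σ_min(Uᵀ Û)² = sin Θ(U, Û)²`.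
Since `Â V̂ = Û D̂`, we have `y = (A + E) V̂ D̂⁻¹ v`, and `A` vanishes under the projection onto
`(col U)ᗮ`, so that component has length at most `‖E‖ ‖D̂⁻¹ v‖ ≤ ‖E‖ / σ̂_d`. The bound for `V`
is the same argument applied to `Âᵀ Û = V̂ D̂`.
-/

open Matrix Kronecker
namespace KPF

/-- Column-major vectorization of a matrix, indexed by (column, row). -/
def vec {p q : ℕ} (M : Matrix (Fin p) (Fin q) ℝ) : Fin q × Fin p → ℝ :=
  fun jc => M jc.2 jc.1

/-- The Pitsianis–Van Loan rearrangement operator: rows of `R M` are the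
vectorized `p1 × q1` blocks of `M`. -/
def R {p1 p2 q1 q2 : ℕ} (M : Matrix (Fin p2 × Fin p1) (Fin q2 × Fin q1) ℝ) :
    Matrix (Fin q2 × Fin p2) (Fin q1 × Fin p1) ℝ :=
  fun ji cr => M (ji.2, cr.2) (ji.1, cr.1)

/-- Frobenius norm. -/
noncomputable def frob {m n : Type*} [Fintype m] [Fintype n] (M : Matrix m n ℝ) : ℝ :=
  Real.sqrt (∑ i, ∑ j, (M i j) ^ 2)

/-- Spectral (ℓ2 operator) norm. -/
noncomputable def spec {m n : Type*} [Fintype m] [Fintype n] [DecidableEq n]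
    (A : Matrix m n ℝ) : ℝ :=
  ‖LinearMap.toContinuousLinearMap (Matrix.toEuclideanLin A)‖

/-- Singular values of a matrix, in non-increasing order. -/
noncomputable def sv {m n : ℕ} (A : Matrix (Fin m) (Fin n) ℝ) : Fin n → ℝ :=
  fun k =>
    Real.sqrt ((show (Aᵀ * A).IsHermitian by simpa [Matrix.conjTranspose_eq_transpose_of_trivial] using Matrix.isHermitian_conjTranspose_mul_self A).eigenvalues
      (Tuple.sort (show (Aᵀ * A).IsHermitian by simpa [Matrix.conjTranspose_eq_transpose_of_trivial] using Matrix.isHermitian_conjTranspose_mul_self A).eigenvalues k.rev))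

/-- Smallest singular value of a square matrix. -/
noncomputable def sMin {d : ℕ} (A : Matrix (Fin d) (Fin d) ℝ) : ℝ :=
  sInf (Set.range (sv A))

/-- sin-Θ distance between the column spans of two orthonormal matrices. -/
noncomputable def sinTheta {p d : ℕ} (W1 W2 : Matrix (Fin p) (Fin d) ℝ) : ℝ :=
  Real.sqrt (1 - (sMin (W1ᵀ * W2)) ^ 2)

open scoped Matrix.Norms.L2Operator

lemma spec_nonneg {ι κ : Type*} [Fintype ι] [Fintype κ] [DecidableEq κ] (A : Matrix ι κ ℝ) :
    0 ≤ spec A :=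
  norm_nonneg _

lemma spec_transpose {ι κ : Type*} [Fintype ι] [Fintype κ] [DecidableEq ι] [DecidableEq κ]
    (A : Matrix ι κ ℝ) : spec Aᵀ = spec A :=
  l2_opNorm_conjTranspose A

section DotProduct

variable {ι κ : Type*} [Fintype ι] [Fintype κ]

lemma euclidean_norm_sq_eq_dotProduct_self (v : ι → ℝ) :
    ‖(EuclideanSpace.equiv ι ℝ).symm v‖ ^ 2 = v ⬝ᵥ v := by
  rw [EuclideanSpace.real_norm_sq_eq]
  simp [dotProduct, sq]

lemma dotProduct_mulVec_eq_transpose (M : Matrix ι κ ℝ) (x : ι → ℝ) (y : κ → ℝ) :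
    x ⬝ᵥ (M *ᵥ y) = (Mᵀ *ᵥ x) ⬝ᵥ y := by
  rw [dotProduct_mulVec, mulVec_transpose]

lemma mulVec_dotProduct_self_of_transpose_mul_self [DecidableEq κ] {M : Matrix ι κ ℝ}
    (hM : Mᵀ * M = 1) (v : κ → ℝ) : (M *ᵥ v) ⬝ᵥ (M *ᵥ v) = v ⬝ᵥ v := by
  rw [dotProduct_mulVec_eq_transpose, mulVec_mulVec, hM, one_mulVec]

lemma sub_proj_dotProduct_self [DecidableEq κ] {U : Matrix ι κ ℝ} (hU : Uᵀ * U = 1)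
    (y : ι → ℝ) :
    (y - U *ᵥ (Uᵀ *ᵥ y)) ⬝ᵥ (y - U *ᵥ (Uᵀ *ᵥ y)) = y ⬝ᵥ y - (Uᵀ *ᵥ y) ⬝ᵥ (Uᵀ *ᵥ y) := by
  have hcross : y ⬝ᵥ (U *ᵥ (Uᵀ *ᵥ y)) = (Uᵀ *ᵥ y) ⬝ᵥ (Uᵀ *ᵥ y) :=
    dotProduct_mulVec_eq_transpose _ _ _
  rw [sub_dotProduct, dotProduct_sub, dotProduct_sub, dotProduct_comm (U *ᵥ _) y, hcross,
    mulVec_dotProduct_self_of_transpose_mul_self hU]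
  ring

lemma mulVec_dotProduct_self_le [DecidableEq κ] (A : Matrix ι κ ℝ) (x : κ → ℝ) :
    (A *ᵥ x) ⬝ᵥ (A *ᵥ x) ≤ spec A ^ 2 * (x ⬝ᵥ x) := by
  rw [← euclidean_norm_sq_eq_dotProduct_self, ← euclidean_norm_sq_eq_dotProduct_self, ← mul_pow]
  exact pow_le_pow_left₀ (norm_nonneg _) (l2_opNorm_mulVec A _) 2

lemma sub_proj_dotProduct_self_le [DecidableEq κ] {U : Matrix ι κ ℝ} (hU : Uᵀ * U = 1)
    (y : ι → ℝ) : (y - U *ᵥ (Uᵀ *ᵥ y)) ⬝ᵥ (y - U *ᵥ (Uᵀ *ᵥ y)) ≤ y ⬝ᵥ y := by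
  rw [sub_proj_dotProduct_self hU]
  exact sub_le_self _ (dotProduct_star_self_nonneg _)

lemma div_dotProduct_self_le {v D : ι → ℝ} {c : ℝ} (hc : 0 < c) (hD : ∀ i, c ≤ D i) :
    (fun i => v i / D i) ⬝ᵥ (fun i => v i / D i) ≤ v ⬝ᵥ v / c ^ 2 := by
  simp only [dotProduct, Finset.sum_div]
  gcongr with i
  rw [div_mul_div_comm, ← sq (D i)]
  exact div_le_div_of_nonneg_left (mul_self_nonneg _) (by positivity)
    (pow_le_pow_left₀ hc.le (hD i) 2)

end DotProduct

lemma mul_transpose_mul_mul_cancel {ι κ μ : Type*} [Fintype ι] [Fintype κ] [DecidableEq κ]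
    {U : Matrix ι κ ℝ} (hU : Uᵀ * U = 1) (M : Matrix κ μ ℝ) : U * Uᵀ * (U * M) = U * M := by
  rw [Matrix.mul_assoc, ← Matrix.mul_assoc Uᵀ, hU, Matrix.one_mul]

lemma isHermitian_transpose_mul_self {ι κ : Type*} [Fintype ι] (A : Matrix ι κ ℝ) :
    (Aᵀ * A).IsHermitian :=
  isHermitian_conjTranspose_mul_self A

lemma sv_antitone {m n : ℕ} (A : Matrix (Fin m) (Fin n) ℝ) : Antitone (sv A) := fun _ _ hjk =>
  Real.sqrt_le_sqrt <|
    Tuple.monotone_sort (isHermitian_transpose_mul_self A).eigenvalues (Fin.rev_le_rev.mpr hjk)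

lemma exists_dotProduct_self_eq_one_and_eq_sMin_sq {d : ℕ} (hd : 0 < d)
    (W : Matrix (Fin d) (Fin d) ℝ) :
    ∃ v : Fin d → ℝ, v ⬝ᵥ v = 1 ∧ (W *ᵥ v) ⬝ᵥ (W *ᵥ v) = sMin W ^ 2 := by
  have : Nonempty (Fin d) := ⟨⟨0, hd⟩⟩
  obtain ⟨k, hk⟩ : sMin W ∈ Set.range (sv W) :=
    (Set.range_nonempty _).csInf_mem (Set.finite_range _)
  set hH := isHermitian_transpose_mul_self W
  set i := Tuple.sort hH.eigenvalues k.rev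
  set v : Fin d → ℝ := ⇑(hH.eigenvectorBasis i)
  have hunit : v ⬝ᵥ v = 1 := by
    rw [← euclidean_norm_sq_eq_dotProduct_self]
    simp [v, hH.eigenvectorBasis.orthonormal.1 i]
  have hWv : (W *ᵥ v) ⬝ᵥ (W *ᵥ v) = hH.eigenvalues i := by
    rw [dotProduct_mulVec_eq_transpose, mulVec_mulVec, hH.mulVec_eigenvectorBasis i,
      smul_dotProduct, smul_eq_mul, hunit, mul_one]
  refine ⟨v, hunit, ?_⟩
  rw [← hk, hWv]
  exact (Real.sq_sqrt (hWv ▸ dotProduct_star_self_nonneg _)).symm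

lemma sinTheta_le_spec_div {p d : ℕ} {q : Type*} [Fintype q] [DecidableEq q] (hd : 0 < d)
    {U Uh : Matrix (Fin p) (Fin d) ℝ} {Vh : Matrix q (Fin d) ℝ} {B E : Matrix (Fin p) q ℝ}
    {Dh : Fin d → ℝ} {c : ℝ} (hU : Uᵀ * U = 1) (hB : U * Uᵀ * B = B) (hUh : Uhᵀ * Uh = 1)
    (hVh : Vhᵀ * Vh = 1) (hsvd : (B + E) * Vh = Uh * diagonal Dh) (hc : 0 < c)
    (hDh : ∀ k, c ≤ Dh k) :
    sinTheta U Uh ≤ spec E / c := by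
  obtain ⟨v, hv, hWv⟩ := exists_dotProduct_self_eq_one_and_eq_sMin_sq hd (Uᵀ * Uh)
  set w : Fin d → ℝ := fun k => v k / Dh k
  set s := Vh *ᵥ w
  have hDw : diagonal Dh *ᵥ w = v := by
    ext k
    simp [mulVec_diagonal, w, mul_div_cancel₀ _ (hc.trans_le (hDh k)).ne']
  have hy : Uh *ᵥ v = (B + E) *ᵥ s := by
    rw [mulVec_mulVec, hsvd, ← mulVec_mulVec, hDw]
  have hBs : U *ᵥ (Uᵀ *ᵥ (B *ᵥ s)) = B *ᵥ s := by
    rw [mulVec_mulVec, mulVec_mulVec, hB]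
  have hperp : Uh *ᵥ v - U *ᵥ (Uᵀ *ᵥ (Uh *ᵥ v)) = E *ᵥ s - U *ᵥ (Uᵀ *ᵥ (E *ᵥ s)) := by
    rw [hy, add_mulVec, mulVec_add, mulVec_add, hBs]
    abel
  rw [sinTheta, Real.sqrt_le_left (div_nonneg (spec_nonneg E) hc.le)]
  calc 1 - sMin (Uᵀ * Uh) ^ 2
      = (Uh *ᵥ v - U *ᵥ (Uᵀ *ᵥ (Uh *ᵥ v))) ⬝ᵥ (Uh *ᵥ v - U *ᵥ (Uᵀ *ᵥ (Uh *ᵥ v))) := by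
        rw [sub_proj_dotProduct_self hU, mulVec_dotProduct_self_of_transpose_mul_self hUh, hv,
          ← hWv, mulVec_mulVec]
    _ ≤ (E *ᵥ s) ⬝ᵥ (E *ᵥ s) := hperp ▸ sub_proj_dotProduct_self_le hU _
    _ ≤ spec E ^ 2 * (w ⬝ᵥ w) := by
        rw [← mulVec_dotProduct_self_of_transpose_mul_self hVh w]
        exact mulVec_dotProduct_self_le E s
    _ ≤ spec E ^ 2 * (1 / c ^ 2) := by
        gcongr
        simpa [hv] using div_dotProduct_self_le hc hDh (v := v)
    _ = (spec E / c) ^ 2 := by ring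

theorem stmt11_general {m n d : ℕ} (hd : 0 < d) (hdn : d ≤ n)
    (σ : Fin d → ℝ) (U : Matrix (Fin m) (Fin d) ℝ) (V : Matrix (Fin n) (Fin d) ℝ)
    (A E : Matrix (Fin m) (Fin n) ℝ)
    (hU : Uᵀ * U = 1) (hV : Vᵀ * V = 1)
    (hA : A = U * Matrix.diagonal σ * Vᵀ)
    (Uh : Matrix (Fin m) (Fin d) ℝ) (Vh : Matrix (Fin n) (Fin d) ℝ) (Dh : Fin d → ℝ)
    (hUh : Uhᵀ * Uh = 1) (hVh : Vhᵀ * Vh = 1)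
    -- the diagonal of D̂ consists of the d largest singular values of Â = A + E
    (hDh : ∀ k : Fin d, Dh k = sv (A + E) (Fin.castLE hdn k))
    -- (Û, V̂, D̂) are singular pairs of Â = A + E
    (hsvd1 : (A + E) * Vh = Uh * Matrix.diagonal Dh)
    (hsvd2 : (A + E)ᵀ * Uh = Vh * Matrix.diagonal Dh)
    (hpos : 0 < Dh ⟨d - 1, Nat.sub_lt hd one_pos⟩) :
    sinTheta U Uh ≤ spec E / Dh ⟨d - 1, Nat.sub_lt hd one_pos⟩ ∧
    sinTheta V Vh ≤ spec E / Dh ⟨d - 1, Nat.sub_lt hd one_pos⟩ := by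
  have hc : ∀ k, Dh ⟨d - 1, Nat.sub_lt hd one_pos⟩ ≤ Dh k := fun k => by
    rw [hDh, hDh]
    exact sv_antitone _ (by simp only [Fin.le_def, Fin.val_castLE]; omega)
  have hAU : U * Uᵀ * A = A := by
    rw [hA, Matrix.mul_assoc U (diagonal σ), mul_transpose_mul_mul_cancel hU]
  have hAV : V * Vᵀ * Aᵀ = Aᵀ := by
    rw [hA, transpose_mul, transpose_mul, transpose_transpose, diagonal_transpose,
      mul_transpose_mul_mul_cancel hV]
  refine ⟨sinTheta_le_spec_div hd hU hAU hUh hVh hsvd1 hpos hc, ?_⟩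
  rw [← spec_transpose E]
  exact sinTheta_le_spec_div hd hV hAV hVh hUh (by rwa [← transpose_add]) hpos hc

/-- Wedin's sin-Θ theorem for the leading-d truncated SVD of a perturbed
rank-d matrix. -/
theorem stmt11 {m n d : ℕ} (hd : 0 < d) (hdn : d ≤ n)
    (σ : Fin d → ℝ) (U : Matrix (Fin m) (Fin d) ℝ) (V : Matrix (Fin n) (Fin d) ℝ)
    (A E : Matrix (Fin m) (Fin n) ℝ)
    (hU : Uᵀ * U = 1) (hV : Vᵀ * V = 1) (hσ : ∀ k, 0 < σ k)
    (hA : A = U * Matrix.diagonal σ * Vᵀ)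
    (Uh : Matrix (Fin m) (Fin d) ℝ) (Vh : Matrix (Fin n) (Fin d) ℝ) (Dh : Fin d → ℝ)
    (hUh : Uhᵀ * Uh = 1) (hVh : Vhᵀ * Vh = 1)
    -- the diagonal of D̂ consists of the d largest singular values of Â = A + E
    (hDh : ∀ k : Fin d, Dh k = sv (A + E) (Fin.castLE hdn k))
    -- (Û, V̂, D̂) are singular pairs of Â = A + E
    (hsvd1 : (A + E) * Vh = Uh * Matrix.diagonal Dh)
    (hsvd2 : (A + E)ᵀ * Uh = Vh * Matrix.diagonal Dh)
    (hpos : 0 < Dh ⟨d - 1, Nat.sub_lt hd one_pos⟩) :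
    sinTheta U Uh ≤ spec E / Dh ⟨d - 1, Nat.sub_lt hd one_pos⟩ ∧
    sinTheta V Vh ≤ spec E / Dh ⟨d - 1, Nat.sub_lt hd one_pos⟩ :=
  stmt11_general hd hdn σ U V A E hU hV hA Uh Vh Dh hUh hVh hDh hsvd1 hsvd2 hpos

end KPF
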